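/- arXiv:2205.04309 — 4 statements merged into one kernel-verified Lean document; each statement's English description precedes it below -/
import Mathlib

section
/- Let val : C^ω → X be a C-valuation such that for every cardinal κ there exists a completely well-monotonic (κ,val)-universal C-graph. Then val is positional. -/
/-!
Common vocabulary: graphs as edge relations `E : V → C → V → Prop` (a `C`-graph
additionally has no sinks), infinite paths and their colorations, valuations,
values of vertices, morphisms, universality, monotonic graphs, games,
strategies, positional strategies and positionality, neutral colors.
-/

universe u v w

section Prelim

variable {C : Type} {X : Type}

/-- A `C`-graph (as an edge relation) has no sinks. -/
def NoSinks {V : Type v} (E : V → C → V → Prop) : Prop :=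
  ∀ a : V, ∃ (c : C) (b : V), E a c b

/-- `InfPath E a w` : there is an infinite path from `a` with coloration `w`. -/
def InfPath {V : Type v} (E : V → C → V → Prop) (a : V) (w : ℕ → C) : Prop :=
  ∃ ρ : ℕ → V, ρ 0 = a ∧ ∀ i, E (ρ i) (w i) (ρ (i + 1))

/-- The value of a vertex in a graph: supremum of values of colorations of
infinite paths from it. -/
noncomputable def vval {V : Type v} [CompleteLinearOrder X]
    (val : (ℕ → C) → X) (E : V → C → V → Prop) (a : V) : X :=
  sSup (val '' {w | InfPath E a w})

/-- Morphisms of `C`-graphs. -/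
def IsMorphism {V : Type v} {V' : Type w} (E : V → C → V → Prop)
    (E' : V' → C → V' → Prop) (φ : V → V') : Prop :=
  ∀ ⦃a : V⦄ ⦃c : C⦄ ⦃b : V⦄, E a c b → E' (φ a) c (φ b)

/-- `val`-preserving morphisms of `C`-graphs. -/
def ValPreserving {V : Type v} {V' : Type w} [CompleteLinearOrder X]
    (val : (ℕ → C) → X) (E : V → C → V → Prop) (E' : V' → C → V' → Prop)
    (φ : V → V') : Prop :=
  IsMorphism E E' φ ∧ ∀ a : V, vval val E' (φ a) = vval val E a

/-- Left composition: `a ≥ b → (b →c d) → (a →c d)`. -/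
def LeftComp {L : Type v} [LinearOrder L] (M : L → C → L → Prop) : Prop :=
  ∀ ⦃a b : L⦄ ⦃c : C⦄ ⦃d : L⦄, b ≤ a → M b c d → M a c d

/-- Right composition: `(a →c b) → b ≥ d → (a →c d)`. -/
def RightComp {L : Type v} [LinearOrder L] (M : L → C → L → Prop) : Prop :=
  ∀ ⦃a : L⦄ ⦃c : C⦄ ⦃b d : L⦄, M a c b → d ≤ b → M a c d

/-- A monotonic graph over a linearly ordered vertex set. -/
def Monotonic {L : Type v} [LinearOrder L] (M : L → C → L → Prop) : Prop :=
  LeftComp M ∧ RightComp M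

/-- Every vertex has a `c`-predecessor, for every color `c`. -/
def CompletePreds {L : Type v} (M : L → C → L → Prop) : Prop :=
  ∀ (c : C) (l : L), ∃ p : L, M p c l

/-- `CWM C L M` : `M` is a completely well-monotonic `C`-graph over `L`:
monotonic, without sinks, well-ordered, a complete lattice, and with all
`c`-predecessors. -/
def CWM (C : Type) (L : Type v) [LinearOrder L] (M : L → C → L → Prop) : Prop :=
  Monotonic M ∧ NoSinks M ∧ WellFounded ((· < ·) : L → L → Prop) ∧
    (∀ A : Set L, ∃ a : L, IsLUB A a) ∧ CompletePreds M

/-- `(κ, val)`-universality: every `C`-graph with fewer than `κ` vertices has a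
`val`-preserving morphism into `M`. -/
def Universal {L : Type v} [CompleteLinearOrder X] (val : (ℕ → C) → X)
    (κ : Cardinal.{u}) (M : L → C → L → Prop) : Prop :=
  ∀ (V : Type u) (E : V → C → V → Prop), NoSinks E → Cardinal.mk V < κ →
    ∃ φ : V → L, ValPreserving val E M φ

/-! Histories: finite paths from `v₀`, stored as lists of steps `(c, x)`,
most recent step first. -/

/-- Last vertex of a history. -/
def lastV {V : Type v} (v₀ : V) : List (C × V) → V
  | [] => v₀
  | (_, x) :: _ => x

/-- Validity of a history with respect to the graph `E` and start vertex `v₀`. -/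
def ValidPath {V : Type v} (E : V → C → V → Prop) (v₀ : V) : List (C × V) → Prop
  | [] => True
  | (c, x) :: rest => ValidPath E v₀ rest ∧ E (lastV v₀ rest) c x

/-- A strategy (for Eve) from `v₀` in the game `(E, VEve, val)` : a subgraph
`(H, F)` of the unfolding of `E` from `v₀`, containing the empty history,
without sinks, and closed under all extensions at Adam vertices. -/
structure Strategy {V : Type v} (E : V → C → V → Prop) (VEve : Set V) (v₀ : V) where
  H : Set (List (C × V))
  F : List (C × V) → C → List (C × V) → Prop
  valid : ∀ π ∈ H, ValidPath E v₀ π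
  nil_mem : [] ∈ H
  F_sub : ∀ ⦃π : List (C × V)⦄ ⦃c : C⦄ ⦃π' : List (C × V)⦄,
    F π c π' → π ∈ H ∧ π' ∈ H ∧ ∃ x : V, π' = (c, x) :: π
  no_sink : ∀ π ∈ H, ∃ (c : C) (π' : List (C × V)), F π c π'
  adam_closed : ∀ π ∈ H, lastV v₀ π ∉ VEve →
    ∀ (c : C) (x : V), E (lastV v₀ π) c x → ((c, x) :: π) ∈ H ∧ F π c ((c, x) :: π)

/-- The value of a strategy: supremum of values of colorations of infinite
paths from the empty history in the strategy. -/
noncomputable def Strategy.value {V : Type v} [CompleteLinearOrder X]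
    (val : (ℕ → C) → X) {E : V → C → V → Prop} {VEve : Set V} {v₀ : V}
    (S : Strategy E VEve v₀) : X :=
  sSup (val '' {w | ∃ ρ : ℕ → List (C × V), ρ 0 = [] ∧ ∀ i, S.F (ρ i) (w i) (ρ (i + 1))})

/-- The value of a vertex in a game: infimum of values of strategies from it. -/
noncomputable def gameValue {V : Type v} [CompleteLinearOrder X] (val : (ℕ → C) → X)
    (E : V → C → V → Prop) (VEve : Set V) (v₀ : V) : X :=
  ⨅ S : Strategy E VEve v₀, S.value val

/-- A positional strategy: a subgraph of `E` over all vertices keeping all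
outgoing edges of Adam vertices. -/
structure PosStrategy {V : Type v} (E : V → C → V → Prop) (VEve : Set V) where
  F : V → C → V → Prop
  sub : ∀ ⦃a : V⦄ ⦃c : C⦄ ⦃b : V⦄, F a c b → E a c b
  no_sink : NoSinks F
  adam_all : ∀ a : V, a ∉ VEve → ∀ (c : C) (b : V), E a c b → F a c b

/-- The value of a positional strategy from a vertex. -/
noncomputable def PosStrategy.value {V : Type v} [CompleteLinearOrder X]
    (val : (ℕ → C) → X) {E : V → C → V → Prop} {VEve : Set V}
    (P : PosStrategy E VEve) (v₀ : V) : X :=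
  vval val P.F v₀

/-- Optimality of a positional strategy. -/
def PosStrategy.Optimal {V : Type v} [CompleteLinearOrder X]
    (val : (ℕ → C) → X) {E : V → C → V → Prop} {VEve : Set V}
    (P : PosStrategy E VEve) : Prop :=
  ∀ v₀ : V, P.value val v₀ = gameValue val E VEve v₀

/-- A valuation is positional if every game with this valuation admits an
optimal positional strategy. -/
def Positional [CompleteLinearOrder X] (val : (ℕ → C) → X) : Prop :=
  ∀ (V : Type u) (E : V → C → V → Prop), NoSinks E → ∀ VEve : Set V,
    ∃ P : PosStrategy E VEve, P.Optimal val

/-! Words and neutral colors. -/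

/-- Concatenation of a finite word with an infinite word. -/
def wcat (u : List C) (w : ℕ → C) : ℕ → C := fun i =>
  if h : i < u.length then u.get ⟨i, h⟩ else w (i - u.length)

/-- `w'` is obtained from `w` by inserting finitely many `e`'s between
consecutive letters (and before the first letter):
`w' = e^{n₀} w₀ e^{n₁} w₁ ⋯`. -/
def IsEpsInsertion (e : C) (w w' : ℕ → C) : Prop :=
  ∃ σ : ℕ → ℕ, StrictMono σ ∧ (∀ k, w' (σ k) = w k) ∧ ∀ i, i ∉ Set.range σ → w' i = e

/-- `e` is a neutral color for `val`. -/
def Neutral [CompleteLinearOrder X] (val : (ℕ → C) → X) (e : C) : Prop :=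
  ∀ w w' : ℕ → C, IsEpsInsertion e w w' → val w' = val w

/-- `e` is eventually good for Eve. -/
def EvGoodForEve [CompleteLinearOrder X] (val : (ℕ → C) → X) (e : C) : Prop :=
  ∀ u : List C, val (wcat u fun _ => e) = ⨅ z : ℕ → C, val (wcat u z)

/-- `e` is strongly neutral for `val`. -/
def StronglyNeutral [CompleteLinearOrder X] (val : (ℕ → C) → X) (e : C) : Prop :=
  Neutral val e ∧ EvGoodForEve val e

/-- Prefix-increasing valuations. -/
def PrefixIncreasing [CompleteLinearOrder X] (val : (ℕ → C) → X) : Prop :=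
  ∀ (u : List C) (w : ℕ → C), val w ≤ val (wcat u w)

/-! Objectives. -/

/-- The valuation (into the two-element complete linear order `Prop`,
`⊥ = False`, `⊤ = True`) associated with an objective `W`: winning words have
value `⊥`. -/
def toVal (W : Set (ℕ → C)) : (ℕ → C) → Prop := fun w => w ∉ W

/-- A vertex satisfies the objective `W` if every coloration of an infinite
path from it belongs to `W`. -/
def Sat {V : Type v} (W : Set (ℕ → C)) (E : V → C → V → Prop) (a : V) : Prop :=
  ∀ w : ℕ → C, InfPath E a w → w ∈ W

/-- Prefix-invariant objectives. -/
def PrefixInvariant (W : Set (ℕ → C)) : Prop :=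
  ∀ (u : List C) (w : ℕ → C), wcat u w ∈ W ↔ w ∈ W

/-- The completion `L^⊤` of a monotonic graph: a new top vertex with all
outgoing edges is added. -/
def completionE {L : Type v} (M : L → C → L → Prop) :
    WithTop L → C → WithTop L → Prop := fun x c y =>
  x = ⊤ ∨ ∃ a b : L, x = (a : WithTop L) ∧ y = (b : WithTop L) ∧ M a c b

/-- A graph has sufficiently many `e`-edges if `→e` is "well-founded" in the
sense that every nonempty set of vertices contains a vertex `a` with `b →e a`
for all `b` in the set. -/
def SuffEps {V : Type v} (E : V → C → V → Prop) (e : C) : Prop :=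
  ∀ A : Set V, A.Nonempty → ∃ a ∈ A, ∀ b ∈ A, E b e a

end Prelim

/-!
Eve plays every strategy at once: the disjoint union of all strategy trees is a graph with fewer
than `κ` vertices for `κ` large enough, so it embeds, preserving values, into a completely
well-monotonic graph `M`. Sending each game vertex `v` to the least image `ψ v` of a history
ending in `v` (a well-order has minima), and letting Eve keep only the edges `v →c x` with
`ψ v →c ψ x` in `M`, gives a positional strategy: right composition turns every move of every
strategy into such an edge. Its value from `v₀` is at most `val_M (ψ v₀)`, and by left composition
this is at most the value of the image of the root of any strategy from `v₀`.
-/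

section Proof

variable {C X : Type} [CompleteLinearOrder X]

lemma vval_le_of_isMorphism {V : Type v} {V' : Type w} (val : (ℕ → C) → X)
    {E : V → C → V → Prop} {E' : V' → C → V' → Prop} {φ : V → V'} (hφ : IsMorphism E E' φ)
    (a : V) : vval val E a ≤ vval val E' (φ a) := by
  refine sSup_le_sSup (Set.image_mono ?_)
  rintro w ⟨ρ, rfl, hρ⟩
  exact ⟨φ ∘ ρ, rfl, fun i => hφ (hρ i)⟩

lemma vval_mono_of_leftComp {L : Type v} [LinearOrder L] (val : (ℕ → C) → X)
    {M : L → C → L → Prop} (hM : LeftComp M) : Monotone (vval val M) := by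
  intro l l' hl
  refine sSup_le_sSup (Set.image_mono ?_)
  rintro w ⟨ρ, rfl, hρ⟩
  refine ⟨Function.update ρ 0 l', rfl, fun i => ?_⟩
  cases i with
  | zero => simpa using hM hl (hρ 0)
  | succ i => simpa using hρ (i + 1)

lemma ValidPath.mono {V : Type v} {E E' : V → C → V → Prop}
    (h : ∀ ⦃a : V⦄ ⦃c : C⦄ ⦃b : V⦄, E a c b → E' a c b) {v₀ : V} :
    ∀ {π : List (C × V)}, ValidPath E v₀ π → ValidPath E' v₀ π
  | [], _ => trivial
  | (_, _) :: _, hπ => ⟨ValidPath.mono h hπ.1, h hπ.2⟩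

section Unfolding

variable {V : Type v} {E : V → C → V → Prop} {VEve : Set V}

def Strategy.ofSubgraph (F : V → C → V → Prop)
    (hsub : ∀ ⦃a : V⦄ ⦃c : C⦄ ⦃b : V⦄, F a c b → E a c b) (hF : NoSinks F)
    (hadam : ∀ a : V, a ∉ VEve → ∀ (c : C) (b : V), E a c b → F a c b) (v₀ : V) :
    Strategy E VEve v₀ where
  H := {π | ValidPath F v₀ π}
  F π c π' := ValidPath F v₀ π ∧ ∃ x, π' = (c, x) :: π ∧ F (lastV v₀ π) c x
  valid _ hπ := hπ.mono hsub
  nil_mem := trivial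
  F_sub := by
    rintro π c π' ⟨hπ, x, rfl, hx⟩
    exact ⟨hπ, ⟨hπ, hx⟩, x, rfl⟩
  no_sink π hπ := by
    obtain ⟨c, x, hx⟩ := hF (lastV v₀ π)
    exact ⟨c, (c, x) :: π, hπ, x, rfl, hx⟩
  adam_closed π hπ hA c x hx := ⟨⟨hπ, hadam _ hA c x hx⟩, hπ, x, rfl, hadam _ hA c x hx⟩

lemma Strategy.value_ofSubgraph_le (val : (ℕ → C) → X) (F : V → C → V → Prop)
    (hsub : ∀ ⦃a : V⦄ ⦃c : C⦄ ⦃b : V⦄, F a c b → E a c b) (hF : NoSinks F)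
    (hadam : ∀ a : V, a ∉ VEve → ∀ (c : C) (b : V), E a c b → F a c b) (v₀ : V) :
    (Strategy.ofSubgraph F hsub hF hadam v₀).value val ≤ vval val F v₀ := by
  refine sSup_le_sSup (Set.image_mono ?_)
  rintro w ⟨ρ, h0, hρ⟩
  refine ⟨fun i => lastV v₀ (ρ i), by simp [h0, lastV], fun i => ?_⟩
  obtain ⟨-, x, hx, hF⟩ := hρ i
  simpa [hx, lastV] using hF

lemma gameValue_le_posStrategy_value (val : (ℕ → C) → X) (P : PosStrategy E VEve) (v₀ : V) :
    gameValue val E VEve v₀ ≤ P.value val v₀ :=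
  (iInf_le _ _).trans (Strategy.value_ofSubgraph_le val P.F P.sub P.no_sink P.adam_all v₀)

end Unfolding

section Forest

variable {V : Type u} {E : V → C → V → Prop} {VEve : Set V}

structure RootedStrategy (E : V → C → V → Prop) (VEve : Set V) where
  root : V
  strat : Strategy E VEve root

/-- The disjoint union of the trees of all strategies; vertices outside the trees get edges
everywhere, only so that there are no sinks. -/
def strategyForest (E : V → C → V → Prop) (VEve : Set V) :
    RootedStrategy E VEve × List (C × V) → C → RootedStrategy E VEve × List (C × V) → Prop :=
  fun t c t' => (t'.1 = t.1 ∧ t.1.strat.F t.2 c t'.2) ∨ t.2 ∉ t.1.strat.H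

def EndsAt (t : RootedStrategy E VEve × List (C × V)) (v : V) : Prop :=
  t.2 ∈ t.1.strat.H ∧ lastV t.1.root t.2 = v

lemma noSinks_strategyForest (hE : NoSinks E) : NoSinks (strategyForest E VEve) := by
  rintro ⟨b, π⟩
  by_cases hπ : π ∈ b.strat.H
  · obtain ⟨c, π', hF⟩ := b.strat.no_sink π hπ
    exact ⟨c, (b, π'), Or.inl ⟨rfl, hF⟩⟩
  · obtain ⟨c, -⟩ := hE b.root
    exact ⟨c, (b, π), Or.inr hπ⟩

lemma strategyForest_path_mem {b : RootedStrategy E VEve}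
    {ρ : ℕ → RootedStrategy E VEve × List (C × V)} {w : ℕ → C} (h0 : ρ 0 = (b, []))
    (hρ : ∀ i, strategyForest E VEve (ρ i) (w i) (ρ (i + 1))) (i : ℕ) :
    (ρ i).1 = b ∧ (ρ i).2 ∈ b.strat.H := by
  induction i with
  | zero => simpa [h0] using b.strat.nil_mem
  | succ j ih =>
    obtain ⟨hb, hH⟩ := ih
    rcases hρ j with ⟨h1, hF⟩ | hn
    · rw [hb] at hF
      exact ⟨h1.trans hb, (b.strat.F_sub hF).2.1⟩
    · exact absurd (hb ▸ hH) hn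

lemma vval_strategyForest_root (val : (ℕ → C) → X) (b : RootedStrategy E VEve) :
    vval val (strategyForest E VEve) (b, []) = b.strat.value val := by
  unfold vval Strategy.value
  congr 2
  ext w
  constructor
  · rintro ⟨ρ, h0, hρ⟩
    have hmem := strategyForest_path_mem h0 hρ
    refine ⟨fun i => (ρ i).2, by simp [h0], fun i => ?_⟩
    rcases hρ i with ⟨-, hF⟩ | hn
    · rwa [(hmem i).1] at hF
    · exact absurd ((hmem i).1 ▸ (hmem i).2) hn
  · rintro ⟨ρ, h0, hρ⟩
    exact ⟨fun i => (b, ρ i), by simp [h0], fun i => Or.inl ⟨rfl, hρ i⟩⟩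

lemma exists_least_image_endsAt {L : Type v} [LinearOrder L] (hE : NoSinks E)
    (hwf : WellFounded ((· < ·) : L → L → Prop)) (φ : RootedStrategy E VEve × List (C × V) → L) :
    ∃ ψ : V → L, (∀ v t, EndsAt t v → ψ v ≤ φ t) ∧ ∀ v, ∃ t, EndsAt t v ∧ φ t = ψ v := by
  have hne : ∀ v, (φ '' {t | EndsAt t v}).Nonempty := fun v =>
    ⟨_, (⟨v, Strategy.ofSubgraph E (fun _ _ _ => id) hE (fun _ _ _ _ => id) v⟩, []),
      ⟨trivial, rfl⟩, rfl⟩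
  refine ⟨fun v => hwf.min _ (hne v), fun v t ht => ?_, fun v => hwf.min_mem _ (hne v)⟩
  exact not_lt.mp (hwf.not_lt_min _ (Set.mem_image_of_mem φ ht))

variable {L : Type v} [LinearOrder L] {M : L → C → L → Prop}
  {φ : RootedStrategy E VEve × List (C × V) → L} {ψ : V → L}

lemma move_of_endsAt_least (hRC : RightComp M) (hφ : IsMorphism (strategyForest E VEve) M φ)
    (hψ : ∀ v t, EndsAt t v → ψ v ≤ φ t) {v x : V} {c : C} {t : RootedStrategy E VEve × List (C × V)}
    (ht : EndsAt t v) (htψ : φ t = ψ v) (hF : t.1.strat.F t.2 c ((c, x) :: t.2)) :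
    E v c x ∧ M (ψ v) c (ψ x) := by
  have hmem : (c, x) :: t.2 ∈ t.1.strat.H := (t.1.strat.F_sub hF).2.1
  refine ⟨ht.2 ▸ (t.1.strat.valid _ hmem).2, ?_⟩
  have hM : M (φ t) c (φ (t.1, (c, x) :: t.2)) := hφ (Or.inl ⟨rfl, hF⟩)
  exact hRC (htψ ▸ hM) (hψ x _ ⟨hmem, rfl⟩)

lemma exists_posStrategy_isMorphism (hRC : RightComp M)
    (hφ : IsMorphism (strategyForest E VEve) M φ) (hψ_le : ∀ v t, EndsAt t v → ψ v ≤ φ t)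
    (hψ_eq : ∀ v, ∃ t, EndsAt t v ∧ φ t = ψ v) :
    ∃ P : PosStrategy E VEve, IsMorphism P.F M ψ := by
  have hns : NoSinks fun a c b => E a c b ∧ M (ψ a) c (ψ b) := by
    intro a
    obtain ⟨t, ht, htψ⟩ := hψ_eq a
    obtain ⟨c, π', hF⟩ := t.1.strat.no_sink t.2 ht.1
    obtain ⟨-, -, x, rfl⟩ := t.1.strat.F_sub hF
    exact ⟨c, x, move_of_endsAt_least hRC hφ hψ_le ht htψ hF⟩
  have hadam : ∀ a ∉ VEve, ∀ c b, E a c b → E a c b ∧ M (ψ a) c (ψ b) := by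
    intro a ha c b hab
    obtain ⟨t, ht, htψ⟩ := hψ_eq a
    have hF := (t.1.strat.adam_closed t.2 ht.1 (ht.2 ▸ ha) c b (ht.2 ▸ hab)).2
    exact move_of_endsAt_least hRC hφ hψ_le ht htψ hF
  exact ⟨⟨_, fun _ _ _ h => h.1, hns, hadam⟩, fun _ _ _ h => h.2⟩

end Forest

end Proof

/-- Theorem 3.1 / "Structure implies Positionality".
Let `val : C^ω → X` be a valuation such that for every cardinal `κ` there
exists a completely well-monotonic `(κ, val)`-universal graph.  Then `val` is
positional. -/
theorem stmt0 {C X : Type} [CompleteLinearOrder X] (val : (ℕ → C) → X)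
    (h : ∀ κ : Cardinal.{u}, ∃ (L : Type u) (li : LinearOrder L)
      (M : L → C → L → Prop), @CWM C L li M ∧ Universal val κ M) :
    Positional.{u} val := by
  intro V E hE VEve
  obtain ⟨L, _, M, ⟨⟨hLC, hRC⟩, -, hwf, -, -⟩, huniv⟩ :=
    h (Order.succ (Cardinal.mk (RootedStrategy E VEve × List (C × V))))
  obtain ⟨φ, hφ, hφ_val⟩ := huniv _ (strategyForest E VEve) (noSinks_strategyForest hE)
    (Order.lt_succ_of_not_isMax (not_isMax _))
  obtain ⟨ψ, hψ_le, hψ_eq⟩ := exists_least_image_endsAt hE hwf φ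
  obtain ⟨P, hP⟩ := exists_posStrategy_isMorphism hRC hφ hψ_le hψ_eq
  refine ⟨P, fun v₀ => le_antisymm (le_iInf fun S => ?_) (gameValue_le_posStrategy_value val P v₀)⟩
  calc P.value val v₀ ≤ vval val M (ψ v₀) := vval_le_of_isMorphism val hP v₀
    _ ≤ vval val M (φ (⟨v₀, S⟩, [])) :=
      vval_mono_of_leftComp val hLC (hψ_le v₀ _ ⟨S.nil_mem, rfl⟩)
    _ = vval val (strategyForest E VEve) (⟨v₀, S⟩, []) := hφ_val _
    _ = S.value val := vval_strategyForest_root val ⟨v₀, S⟩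
end

section
/- Let val : C^ω → X be a positional C-valuation admitting a strongly neutral color, and let G be a C-graph. Then there exists a completely well-monotonic C-graph G' and a val-preserving morphism from G to G'. -/
/-!
Common vocabulary: graphs as edge relations `E : V → C → V → Prop` (a `C`-graph
additionally has no sinks), infinite paths and their colorations, valuations,
values of vertices, morphisms, universality, monotonic graphs, games,
strategies, positional strategies and positionality, neutral colors.
-/

universe u v w

/-!
In the choice game on `G`, Adam may moreover jump along `e` from a vertex to any nonempty set
`A` containing it, after which Eve moves along `e` to an element of `A` of her choice. Moving
back to where she came from costs Eve nothing (by neutrality, and because `e` is eventually good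
for her when the play stalls forever), so an optimal positional strategy yields a choice function
`A ↦ a_A` such that adding the edges `b →e a_A` for `b ∈ A` preserves all values. Ranking the
vertices along this choice function gives a well-order in which `a →e b` whenever `b ≤ a`.
Closing the graph under left and right composition then preserves values, since every new edge
is simulated by an old one padded with `e`-edges, and adding a top vertex makes it complete.
-/

section Values

variable {C X : Type} [CompleteLinearOrder X] {val : (ℕ → C) → X}
  {V : Type v} {V' : Type w} {E : V → C → V → Prop} {E' : V' → C → V' → Prop}

theorem val_le_vval {a : V} {w : ℕ → C} (h : InfPath E a w) : val w ≤ vval val E a :=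
  le_sSup ⟨w, h, rfl⟩

theorem vval_le {a : V} {x : X} (h : ∀ w, InfPath E a w → val w ≤ x) : vval val E a ≤ x :=
  sSup_le (by rintro _ ⟨w, hw, rfl⟩; exact h w hw)

theorem IsMorphism.comp {V'' : Type*} {E'' : V'' → C → V'' → Prop} {g : V' → V''}
    {f : V → V'} (hg : IsMorphism E' E'' g) (hf : IsMorphism E E' f) : IsMorphism E E'' (g ∘ f) :=
  fun _ _ _ h => hg (hf h)

theorem InfPath.map {f : V → V'} (hf : IsMorphism E E' f) {a : V} {w : ℕ → C}
    (h : InfPath E a w) : InfPath E' (f a) w :=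
  let ⟨ρ, h0, hρ⟩ := h
  ⟨f ∘ ρ, congrArg f h0, fun i => hf (hρ i)⟩

theorem vval_le_vval_of_isMorphism {f : V → V'} (hf : IsMorphism E E' f) (a : V) :
    vval val E a ≤ vval val E' (f a) :=
  vval_le fun _ hw => val_le_vval (hw.map hf)

theorem NoSinks.exists_infPath (hE : NoSinks E) (a : V) : ∃ w, InfPath E a w := by
  choose c b hcb using hE
  exact ⟨fun n => c (b^[n] a), fun n => b^[n] a, rfl,
    fun n => by simpa only [Function.iterate_succ_apply'] using hcb _⟩

end Values

section Loops

variable {C X : Type} [CompleteLinearOrder X] {val : (ℕ → C) → X} {e : C}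
  {V : Type v} {E : V → C → V → Prop}

def withLoops (E : V → C → V → Prop) (e : C) : V → C → V → Prop :=
  fun a c b => E a c b ∨ (c = e ∧ b = a)

theorem eq_of_loops_between {p : ℕ → V} {w : ℕ → C}
    (hp : ∀ n, withLoops E e (p n) (w n) (p (n + 1))) {a b : ℕ} (hab : a ≤ b)
    (h : ∀ i, a ≤ i → i < b → ¬E (p i) (w i) (p (i + 1))) : p b = p a := by
  induction b, hab using Nat.le_induction with
  | base => rfl
  | succ b hab ih =>
    rw [((hp b).resolve_left (h b hab b.lt_succ_self)).2,
      ih fun i hi hib => h i hi (hib.trans b.lt_succ_self)]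

/-- Deleting the loop steps leaves an `E`-path, from whose coloration `w` arises by inserting
`e`'s. -/
theorem val_le_vval_of_withLoops_of_infinite (hne : Neutral val e) {p : ℕ → V} {w : ℕ → C}
    (hp : ∀ n, withLoops E e (p n) (w n) (p (n + 1)))
    (hinf : {n | E (p n) (w n) (p (n + 1))}.Infinite) : val w ≤ vval val E (p 0) := by
  set R : ℕ → Prop := fun n => E (p n) (w n) (p (n + 1))
  have hσ : StrictMono (Nat.nth R) := Nat.nth_strictMono hinf
  have hrange : Set.range (Nat.nth R) = {n | R n} := Nat.range_nth_of_infinite hinf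
  have hbelow : ∀ {i k}, R i → i < Nat.nth R k → ∃ j < k, Nat.nth R j = i := by
    intro i k hi hik
    obtain ⟨j, rfl⟩ : i ∈ Set.range (Nat.nth R) := hrange ▸ hi
    exact ⟨j, hσ.lt_iff_lt.1 hik, rfl⟩
  have hstart : p (Nat.nth R 0) = p 0 := eq_of_loops_between hp (Nat.zero_le _)
    fun i _ hi hRi => by obtain ⟨j, hj, -⟩ := hbelow hRi hi; omega
  have hnext : ∀ k, p (Nat.nth R (k + 1)) = p (Nat.nth R k + 1) := fun k =>
    eq_of_loops_between hp (hσ k.lt_succ_self) fun i hki hi hRi => by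
      obtain ⟨j, hj, rfl⟩ := hbelow hRi hi
      have := hσ.lt_iff_lt.1 hki
      omega
  have hpath : InfPath E (p 0) (w ∘ Nat.nth R) :=
    ⟨p ∘ Nat.nth R, hstart, fun k => by
      simpa only [Function.comp_apply, hnext] using Nat.nth_mem_of_infinite hinf k⟩
  have hins : IsEpsInsertion e (w ∘ Nat.nth R) w :=
    ⟨Nat.nth R, hσ, fun _ => rfl, fun i hi =>
      ((hp i).resolve_left fun hRi => hi (hrange ▸ hRi)).1⟩
  exact (hne _ _ hins).symm ▸ val_le_vval hpath

theorem wcat_ofFn_of_lt (w z : ℕ → C) {N n : ℕ} (h : n < N) :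
    wcat (List.ofFn fun i : Fin N => w i) z n = w n := by
  simp [wcat, h]

theorem wcat_ofFn_of_le (w z : ℕ → C) {N n : ℕ} (h : N ≤ n) :
    wcat (List.ofFn fun i : Fin N => w i) z n = z (n - N) := by
  simp [wcat, Nat.not_lt.2 h]

/-- If only finitely many steps are `E`-edges, the walk ends in `e^ω`; since `e` is
eventually good for Eve, any continuation along an `E`-path does at least as well. -/
theorem vval_withLoops (hE : NoSinks E) (hne : Neutral val e) (hev : EvGoodForEve val e)
    (a : V) : vval val (withLoops E e) a = vval val E a := by
  refine le_antisymm (vval_le ?_)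
    (vval_le_vval_of_isMorphism (f := id) (fun _ _ _ h => Or.inl h) a)
  rintro w ⟨p, rfl, hp⟩
  by_cases hinf : {n | E (p n) (w n) (p (n + 1))}.Infinite
  · exact val_le_vval_of_withLoops_of_infinite hne hp hinf
  obtain ⟨N, hN⟩ := (Set.not_infinite.1 hinf).bddAbove
  have hloop : ∀ n, N < n → ¬E (p n) (w n) (p (n + 1)) := fun n hn h => (hN h).not_gt hn
  set u := List.ofFn fun i : Fin (N + 1) => w i
  have hw : w = wcat u fun _ => e := funext fun n => by
    rcases lt_or_ge n (N + 1) with hn | hn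
    · rw [wcat_ofFn_of_lt w _ hn]
    · rw [wcat_ofFn_of_le w _ hn, ((hp n).resolve_left (hloop n hn)).1]
  obtain ⟨z, ξ, hξ0, hξ⟩ := hE.exists_infPath (p (N + 1))
  set q : ℕ → V := fun n => if n < N + 1 then p n else ξ (n - (N + 1))
  have hqp : ∀ n ≤ N + 1, q n = p n := fun n hn => by
    rcases hn.lt_or_eq with hn | rfl
    · exact if_pos hn
    · simp [q, hξ0]
  have hqξ : ∀ n, N + 1 ≤ n → E (q n) (wcat u z n) (q (n + 1)) := fun n hn => by
    have hq' : ∀ m, N + 1 ≤ m → q m = ξ (m - (N + 1)) := fun m hm => if_neg (by omega)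
    rw [hq' n hn, hq' (n + 1) (by omega), wcat_ofFn_of_le w z hn, Nat.sub_add_comm hn]
    exact hξ _
  have hq : ∀ n, withLoops E e (q n) (wcat u z n) (q (n + 1)) := fun n => by
    rcases lt_or_ge n (N + 1) with hn | hn
    · rw [hqp n hn.le, hqp (n + 1) hn, wcat_ofFn_of_lt w z hn]
      exact hp n
    · exact Or.inl (hqξ n hn)
  have hqinf : {n | E (q n) (wcat u z n) (q (n + 1))}.Infinite :=
    (Set.Ici_infinite (N + 1)).mono hqξ
  calc val w = ⨅ z', val (wcat u z') := hw ▸ hev u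
    _ ≤ val (wcat u z) := iInf_le _ z
    _ ≤ vval val E (q 0) := val_le_vval_of_withLoops_of_infinite hne hq hqinf
    _ = vval val E (p 0) := by rw [hqp 0 (Nat.zero_le _)]

end Loops

section Expansion

variable {C X : Type} [CompleteLinearOrder X] {val : (ℕ → C) → X} {e : C}
  {V : Type v} {V' : Type w} {E : V → C → V → Prop} {E' : V' → C → V' → Prop}

/-- The word `e w₀ e e w₁ e e w₂ e ⋯`. -/
def padWith (e : C) (w : ℕ → C) : ℕ → C :=
  fun i => if i % 3 = 1 then w (i / 3) else e

theorem isEpsInsertion_padWith (e : C) (w : ℕ → C) : IsEpsInsertion e w (padWith e w) := by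
  refine ⟨fun k => 3 * k + 1, fun _ _ h => by dsimp only; omega, fun k => ?_, fun i hi => ?_⟩
  · simp only [padWith]
    rw [if_pos (by omega), show (3 * k + 1) / 3 = k by omega]
  · exact if_neg fun h => hi ⟨i / 3, show 3 * (i / 3) + 1 = i by omega⟩

theorem vval_le_vval_of_simulation (hne : Neutral val e) {f : V → V'}
    (h : ∀ ⦃a c b⦄, E a c b → ∃ x y, E' (f a) e x ∧ E' x c y ∧ E' y e (f b)) (a : V) :
    vval val E a ≤ vval val E' (f a) := by
  refine vval_le fun w ⟨p, hp0, hp⟩ => ?_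
  choose x y hx hxy hy using fun n => h (hp n)
  let ρ : ℕ → V' := fun i =>
    if i % 3 = 0 then f (p (i / 3)) else if i % 3 = 1 then x (i / 3) else y (i / 3)
  have hpath : InfPath E' (f a) (padWith e w) := by
    refine ⟨ρ, by simp [ρ, hp0], fun i => ?_⟩
    obtain ⟨n, rfl | rfl | rfl⟩ : ∃ n, i = 3 * n ∨ i = 3 * n + 1 ∨ i = 3 * n + 2 :=
      ⟨i / 3, by omega⟩
    · have : (3 * n + 1) % 3 = 1 ∧ (3 * n + 1) / 3 = n := by omega
      simpa [ρ, padWith, this] using hx n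
    · have : (3 * n + 1) % 3 = 1 ∧ (3 * n + 1) / 3 = n ∧ (3 * n + 1 + 1) % 3 = 2 ∧
          (3 * n + 1 + 1) / 3 = n := by omega
      simpa [ρ, padWith, this] using hxy n
    · have : (3 * n + 2) % 3 = 2 ∧ (3 * n + 2) / 3 = n ∧ 3 * n + 2 + 1 = 3 * (n + 1) := by
        omega
      simpa [ρ, padWith, this] using hy n
  exact (hne _ _ (isEpsInsertion_padWith e w)).symm ▸ val_le_vval hpath

end Expansion

section MonotoneClosure

variable {C X : Type} [CompleteLinearOrder X] {val : (ℕ → C) → X} {e : C}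
  {L : Type v} [LinearOrder L]

def monotoneClosure (U : L → C → L → Prop) : L → C → L → Prop :=
  fun a c b => ∃ a' ≤ a, ∃ b', b ≤ b' ∧ U a' c b'

theorem monotonic_monotoneClosure (U : L → C → L → Prop) : Monotonic (monotoneClosure U) :=
  ⟨fun _ _ _ _ hba ⟨a', ha', b', hb', h⟩ => ⟨a', ha'.trans hba, b', hb', h⟩,
    fun _ _ _ _ ⟨a', ha', b', hb', h⟩ hdb => ⟨a', ha', b', hdb.trans hb', h⟩⟩

theorem isMorphism_monotoneClosure (U : L → C → L → Prop) :
    IsMorphism U (monotoneClosure U) id :=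
  fun a _ b h => ⟨a, le_rfl, b, le_rfl, h⟩

variable {U : L → C → L → Prop}

theorem noSinks_monotoneClosure (hU : ∀ a b, a ≤ b → U b e a) :
    NoSinks (monotoneClosure U) :=
  fun a => ⟨e, a, isMorphism_monotoneClosure U (hU a a le_rfl)⟩

/-- An edge `a →c b` of the closure is simulated by `a →e a' →c b' →e b` in `U`. -/
theorem vval_monotoneClosure (hne : Neutral val e) (hU : ∀ a b, a ≤ b → U b e a) (a : L) :
    vval val (monotoneClosure U) a = vval val U a :=
  le_antisymm
    (vval_le_vval_of_simulation (f := id) hne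
      (fun _ _ _ ⟨a', ha', b', hb', h⟩ => ⟨a', b', hU _ _ ha', h, hU _ _ hb'⟩) a)
    (vval_le_vval_of_isMorphism (isMorphism_monotoneClosure U) a)

end MonotoneClosure

section Completion

variable {C X : Type} [CompleteLinearOrder X] {val : (ℕ → C) → X}
  {L : Type v} {M : L → C → L → Prop}

theorem Monotonic.completionE [LinearOrder L] (hM : Monotonic M) : Monotonic (completionE M) := by
  refine ⟨fun x y c d hyx h => ?_, fun x c y d h hdy => ?_⟩
  · rcases h with rfl | ⟨a, b, rfl, rfl, hab⟩
    · exact Or.inl (top_le_iff.1 hyx)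
    · induction x using WithTop.recTopCoe with
      | top => exact Or.inl rfl
      | coe x => exact Or.inr ⟨x, b, rfl, rfl, hM.1 (WithTop.coe_le_coe.1 hyx) hab⟩
  · rcases h with rfl | ⟨a, b, rfl, rfl, hab⟩
    · exact Or.inl rfl
    · induction d using WithTop.recTopCoe with
      | top => exact absurd (top_le_iff.1 hdy) WithTop.coe_ne_top
      | coe d => exact Or.inr ⟨a, d, rfl, rfl, hM.2 hab (WithTop.coe_le_coe.1 hdy)⟩

theorem NoSinks.completionE [Nonempty C] (hM : NoSinks M) : NoSinks (completionE M) := by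
  intro x
  induction x using WithTop.recTopCoe with
  | top => exact ⟨Classical.arbitrary C, ⊤, Or.inl rfl⟩
  | coe a =>
    obtain ⟨c, b, h⟩ := hM a
    exact ⟨c, b, Or.inr ⟨a, b, rfl, rfl, h⟩⟩

theorem completePreds_completionE : CompletePreds (completionE M) :=
  fun _ _ => ⟨⊤, Or.inl rfl⟩

theorem isMorphism_coe_completionE : IsMorphism M (completionE M) ((↑) : L → WithTop L) :=
  fun a _ b h => Or.inr ⟨a, b, rfl, rfl, h⟩

theorem infPath_of_infPath_completionE_coe {a : L} {w : ℕ → C}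
    (h : InfPath (completionE M) (a : WithTop L) w) : InfPath M a w := by
  obtain ⟨ρ, h0, hρ⟩ := h
  have hcoe : ∀ n, ∃ b : L, ρ n = b := by
    intro n
    induction n with
    | zero => exact ⟨a, h0⟩
    | succ n ih =>
      obtain ⟨b, hb⟩ := ih
      rcases hρ n with htop | ⟨-, b', -, hb', -⟩
      · exact absurd (hb ▸ htop) WithTop.coe_ne_top
      · exact ⟨b', hb'⟩
  choose σ hσ using hcoe
  refine ⟨σ, WithTop.coe_injective (hσ 0 ▸ h0), fun n => ?_⟩
  rcases hρ n with htop | ⟨x, y, hx, hy, hxy⟩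
  · exact absurd (hσ n ▸ htop) WithTop.coe_ne_top
  · rwa [WithTop.coe_injective ((hσ n).symm.trans hx),
      WithTop.coe_injective ((hσ (n + 1)).symm.trans hy)]

theorem vval_completionE_coe (a : L) : vval val (completionE M) (a : WithTop L) = vval val M a :=
  le_antisymm (vval_le fun _ hw => val_le_vval (infPath_of_infPath_completionE_coe hw))
    (vval_le_vval_of_isMorphism isMorphism_coe_completionE a)

theorem exists_isLUB_of_wellFoundedLT {L : Type*} [LinearOrder L] [OrderTop L] [WellFoundedLT L]
    (A : Set L) : ∃ m, IsLUB A m := by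
  obtain ⟨m, hm, hmin⟩ := wellFounded_lt.has_min (upperBounds A) ⟨⊤, fun _ _ => le_top⟩
  exact ⟨m, hm, fun u hu => not_lt.1 (hmin u hu)⟩

theorem cwm_completionE [Nonempty C] [LinearOrder L] [WellFoundedLT L] (hM : Monotonic M)
    (hs : NoSinks M) : CWM C (WithTop L) (completionE M) :=
  ⟨hM.completionE, hs.completionE, wellFounded_lt, exists_isLUB_of_wellFoundedLT,
    completePreds_completionE⟩

end Completion

section ChoiceGame

variable {C X : Type} [CompleteLinearOrder X] {val : (ℕ → C) → X} {e : C}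
  {V : Type u} {E : V → C → V → Prop}

abbrev ChoiceVertex (V : Type u) : Type u := V ⊕ {A : Set V // A.Nonempty}

def choiceEdge (E : V → C → V → Prop) (e : C) :
    ChoiceVertex V → C → ChoiceVertex V → Prop
  | .inl a, c, .inl b => E a c b
  | .inl a, c, .inr A => c = e ∧ a ∈ A.1
  | .inr A, c, .inl b => c = e ∧ b ∈ A.1
  | .inr _, _, .inr _ => False

def choiceEve (V : Type u) : Set (ChoiceVertex V) := Set.range Sum.inr

theorem inl_notMem_choiceEve (a : V) : (Sum.inl a : ChoiceVertex V) ∉ choiceEve V := by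
  simp [choiceEve]

theorem noSinks_choiceEdge (hE : NoSinks E) (e : C) : NoSinks (choiceEdge E e) := by
  rintro (a | A)
  · obtain ⟨c, b, h⟩ := hE a
    exact ⟨c, .inl b, h⟩
  · exact ⟨e, .inl A.2.choose, rfl, A.2.choose_spec⟩

def prevV (v : V) : List (C × ChoiceVertex V) → ChoiceVertex V
  | [] => .inl v
  | _ :: rest => lastV (.inl v) rest

def ReturnsBack (v : V) : List (C × ChoiceVertex V) → Prop
  | [] => True
  | (_, x) :: rest =>
    ReturnsBack v rest ∧ (lastV (.inl v) rest ∈ choiceEve V → x = prevV v rest)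

def returnHistories (E : V → C → V → Prop) (e : C) (v : V) :
    Set (List (C × ChoiceVertex V)) :=
  {π | ValidPath (choiceEdge E e) (.inl v) π ∧ ReturnsBack v π}

theorem exists_returnHistory_extension {v : V} (hE : NoSinks E) {π : List (C × ChoiceVertex V)}
    (hπ : π ∈ returnHistories E e v) : ∃ c x, ((c, x) :: π) ∈ returnHistories E e v := by
  rcases hlast : lastV (.inl v) π with a | A
  · obtain ⟨c, b, h⟩ := hE a
    refine ⟨c, .inl b, ⟨hπ.1, hlast ▸ h⟩, hπ.2, fun hEve => ?_⟩
    exact absurd (hlast ▸ hEve) (inl_notMem_choiceEve a)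
  · rcases π with _ | ⟨⟨c₀, x₀⟩, rest⟩
    · cases hlast
    obtain rfl : x₀ = .inr A := hlast
    obtain ⟨hvalid, hedge⟩ := hπ.1
    rcases hprev : lastV (.inl v) rest with a | B
    · rw [hprev] at hedge
      exact ⟨e, .inl a, ⟨hπ.1, rfl, hedge.2⟩, hπ.2, fun _ => hprev.symm⟩
    · rw [hprev] at hedge
      exact hedge.elim

def returnStrategy (hE : NoSinks E) (e : C) (v : V) :
    Strategy (choiceEdge E e) (choiceEve V) (.inl v) where
  H := returnHistories E e v
  F π c π' :=
    π ∈ returnHistories E e v ∧ π' ∈ returnHistories E e v ∧ ∃ x, π' = (c, x) :: π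
  valid _ h := h.1
  nil_mem := ⟨trivial, trivial⟩
  F_sub _ _ _ h := h
  no_sink _ hπ :=
    let ⟨c, x, h⟩ := exists_returnHistory_extension hE hπ
    ⟨c, _, hπ, h, x, rfl⟩
  adam_closed π hπ hAdam c x hedge :=
    have h : ((c, x) :: π) ∈ returnHistories E e v :=
      ⟨⟨hπ.1, hedge⟩, hπ.2, fun hEve => absurd hEve hAdam⟩
    ⟨h, hπ, h, x, rfl⟩

def lastInl {W : Type*} (v : V) (y : ℕ → V ⊕ W) : ℕ → V
  | 0 => v
  | n + 1 => (y (n + 1)).elim id fun _ => lastInl v y n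

/-- Projecting a play in which Eve always returns onto `G` turns each visit `a →e A →e a` to a
set `A` into two `e`-loops at `a`. -/
theorem infPath_withLoops_of_returns {v : V} {w : ℕ → C} {y : ℕ → ChoiceVertex V}
    (h0 : y 0 = .inl v) (hy : ∀ n, choiceEdge E e (y n) (w n) (y (n + 1)))
    (hret : ∀ n, y (n + 1) ∈ choiceEve V → y (n + 2) = y n) :
    InfPath (withLoops E e) v w := by
  set p := lastInl v y
  have hpinl : ∀ n a, y n = .inl a → p n = a := by
    rintro (_ | n) a h
    · exact Sum.inl_injective (h0.symm.trans h)
    · simp [p, lastInl, h]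
  have hpinr : ∀ n A, y (n + 1) = .inr A → p (n + 1) = p n := by
    intro n A h
    simp [p, lastInl, h]
  have hback : ∀ n A, y n = .inr A → y (n + 1) = .inl (p n) := by
    rintro (_ | n) A hA
    · cases h0.symm.trans hA
    have hn := hy n
    rw [hA] at hn
    rcases hyn : y n with a | B <;> rw [hyn] at hn
    · rw [hret n ⟨A, hA.symm⟩, hyn, hpinr n A hA, hpinl n a hyn]
    · exact hn.elim
  refine ⟨p, rfl, fun n => ?_⟩
  have hn := hy n
  rcases hyn : y n with a | A
  · rcases hyn1 : y (n + 1) with b | B <;> rw [hyn, hyn1] at hn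
    · rw [hpinl n a hyn, hpinl (n + 1) b hyn1]
      exact Or.inl hn
    · exact Or.inr ⟨hn.1, hpinr n B hyn1⟩
  · have hyn1 := hback n A hyn
    rw [hyn, hyn1] at hn
    exact Or.inr ⟨hn.1, hpinl (n + 1) _ hyn1⟩

theorem returnStrategy_value_le (hE : NoSinks E) (hne : Neutral val e)
    (hev : EvGoodForEve val e) (v : V) : (returnStrategy hE e v).value val ≤ vval val E v := by
  rw [← vval_withLoops hE hne hev]
  refine sSup_le ?_
  rintro _ ⟨w, ⟨ρ, hρ0, hρ⟩, rfl⟩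
  choose x hx using fun n => (hρ n).2.2
  set y : ℕ → ChoiceVertex V := fun n => lastV (.inl v) (ρ n)
  have hyx : ∀ n, y (n + 1) = x n := fun n => by simp only [y, hx n, lastV]
  have hmem : ∀ n, ((w n, x n) :: ρ n) ∈ returnHistories E e v := fun n => hx n ▸ (hρ n).2.1
  refine val_le_vval (infPath_withLoops_of_returns (y := y) (by simp [y, hρ0, lastV])
    (fun n => hyx n ▸ (hmem n).1.2) fun n hEve => ?_)
  rw [hyx, (hmem (n + 1)).2.2 hEve, hx n]
  rfl

end ChoiceGame

section Saturation

variable {C X : Type} [CompleteLinearOrder X] {val : (ℕ → C) → X} {e : C}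

/-- Add to `G` an edge `a →e b` whenever an optimal positional strategy of the choice game moves
from some `A ∋ a` to `b`; then every nonempty `A` contains Eve's choice, an `e`-successor of
all of `A`, and the new edges do not help Adam since Eve could also have returned. -/
theorem exists_suffEps_extension (hpos : Positional.{u} val) (hne : Neutral val e)
    (hev : EvGoodForEve val e) {V : Type u} {E : V → C → V → Prop} (hE : NoSinks E) :
    ∃ U : V → C → V → Prop, IsMorphism E U id ∧ SuffEps U e ∧
      ∀ v, vval val U v = vval val E v := by
  obtain ⟨P, hP⟩ := hpos _ (choiceEdge E e) (noSinks_choiceEdge hE e) (choiceEve V)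
  let U : V → C → V → Prop := fun a c b => E a c b ∨
    c = e ∧ ∃ A : {A : Set V // A.Nonempty}, a ∈ A.1 ∧ P.F (.inr A) e (.inl b)
  have hEU : IsMorphism E U id := fun _ _ _ h => Or.inl h
  refine ⟨U, hEU, fun A hA => ?_, fun v => le_antisymm ?_ (vval_le_vval_of_isMorphism hEU v)⟩
  · obtain ⟨c, b, hcb⟩ := P.no_sink (.inr ⟨A, hA⟩)
    rcases b with a | B
    · obtain ⟨rfl, ha⟩ : c = e ∧ a ∈ A := P.sub hcb
      exact ⟨a, ha, fun b hb => Or.inr ⟨rfl, ⟨A, hA⟩, hb, hcb⟩⟩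
    · exact (P.sub hcb).elim
  have hadam : ∀ ⦃a c b⦄, choiceEdge E e (.inl a) c b → P.F (.inl a) c b :=
    fun a _ _ h => P.adam_all _ (inl_notMem_choiceEve a) _ _ h
  have hsim : ∀ ⦃a c b⦄, U a c b → ∃ x y, withLoops P.F e (.inl a) e x ∧
      withLoops P.F e x c y ∧ withLoops P.F e y e (.inl b) := by
    rintro a c b (h | ⟨rfl, A, ha, hAb⟩)
    · exact ⟨.inl a, .inl b, Or.inr ⟨rfl, rfl⟩, Or.inl (hadam h), Or.inr ⟨rfl, rfl⟩⟩
    · exact ⟨.inr A, .inl b, Or.inl (hadam ⟨rfl, ha⟩), Or.inl hAb, Or.inr ⟨rfl, rfl⟩⟩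
  calc vval val U v
      ≤ vval val (withLoops P.F e) (.inl v) := vval_le_vval_of_simulation hne hsim v
    _ = vval val P.F (.inl v) := vval_withLoops P.no_sink hne hev _
    _ = gameValue val (choiceEdge E e) (choiceEve V) (.inl v) := hP _
    _ ≤ (returnStrategy hE e v).value val := iInf_le _ _
    _ ≤ vval val E v := returnStrategy_value_le hE hne hev v

end Saturation

section Rank

variable {V : Type u}

/-- Once every element of `V` has been enumerated, the junk value `d` is returned. -/
noncomputable def transfiniteEnum (pick : (A : Set V) → A.Nonempty → V) (d : V) :
    Ordinal.{u} → V :=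
  Ordinal.lt_wf.fix fun o g => open Classical in
    if h : {v | ∀ o' (h : o' < o), g o' h ≠ v}.Nonempty then pick _ h else d

theorem transfiniteEnum_eq (pick : (A : Set V) → A.Nonempty → V) (d : V) (o : Ordinal.{u}) :
    open Classical in transfiniteEnum pick d o =
      if h : {v | ∀ o' < o, transfiniteEnum pick d o' ≠ v}.Nonempty then pick _ h else d := by
  rw [transfiniteEnum, WellFounded.fix_eq]

/-- Zermelo's construction: enumerate `V` transfinitely, each time picking an `e`-successor of
all elements not yet enumerated. -/
theorem exists_rank_of_suffEps {C : Type} {e : C} {U : V → C → V → Prop} (h : SuffEps U e) :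
    ∃ rank : V → Ordinal.{u}, Function.Injective rank ∧
      ∀ a b, rank a ≤ rank b → U b e a := by
  rcases isEmpty_or_nonempty V with hV | hV
  · exact ⟨isEmptyElim, fun a => isEmptyElim a, fun a => isEmptyElim a⟩
  choose pick hpick_mem hpick using h
  set g := transfiniteEnum pick (Classical.arbitrary V)
  set rest : Ordinal.{u} → Set V := fun o => {v | ∀ o' < o, g o' ≠ v}
  have hg : ∀ o, (rest o).Nonempty → g o ∈ rest o ∧ ∀ b ∈ rest o, U b e (g o) := by
    intro o ho
    rw [show g o = pick (rest o) ho from (transfiniteEnum_eq _ _ o).trans (dif_pos ho)]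
    exact ⟨hpick_mem _ ho, hpick _ ho⟩
  have hsurj : ∀ v, ∃ o, g o = v := by
    by_contra! ⟨v, hv⟩
    have hrest : ∀ o, v ∈ rest o := fun o o' _ => hv o'
    have hinj : Function.Injective g := by
      intro o₁ o₂ h₁₂
      by_contra hne
      rcases lt_or_gt_of_ne hne with h | h
      · exact (hg o₂ ⟨v, hrest o₂⟩).1 o₁ h h₁₂
      · exact (hg o₁ ⟨v, hrest o₁⟩).1 o₂ h h₁₂.symm
    exact not_small_ordinal.{u, u} (small_of_injective hinj)
  let rank : V → Ordinal.{u} := fun v => sInf {o | g o = v}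
  have hrank : Function.LeftInverse g rank := fun v => csInf_mem (hsurj v)
  refine ⟨rank, hrank.injective, fun a b hab => ?_⟩
  have hb : b ∈ rest (rank a) := fun o' ho' hgo' =>
    (csInf_le' (show o' ∈ {o | g o = b} from hgo')).not_gt (ho'.trans_le hab)
  simpa only [hrank a] using (hg (rank a) ⟨b, hb⟩).2 b hb

end Rank

/-- Theorem 5.1, "Positionality implies structure".
Let `val` be a positional valuation admitting a strongly neutral color, and
let `G` be a `C`-graph.  Then there exists a completely well-monotonic
`C`-graph `G'` with a `val`-preserving morphism from `G` to `G'`. -/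
theorem stmt1 {C X : Type} [CompleteLinearOrder X] (val : (ℕ → C) → X) (e : C)
    (hpos : Positional.{u} val) (hsn : StronglyNeutral val e)
    {V : Type u} (E : V → C → V → Prop) (hE : NoSinks E) :
    ∃ (L : Type u) (li : LinearOrder L) (M : L → C → L → Prop) (φ : V → L),
      @CWM C L li M ∧ ValPreserving val E M φ := by
  obtain ⟨hne, hev⟩ := hsn
  obtain ⟨U, hEU, hsuff, hval⟩ := exists_suffEps_extension hpos hne hev hE
  obtain ⟨rank, hinj, hrank⟩ := exists_rank_of_suffEps hsuff
  let _ : LinearOrder V := LinearOrder.lift' rank hinj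
  have : WellFoundedLT V := ⟨InvImage.wf rank Ordinal.lt_wf⟩
  have : Nonempty C := ⟨e⟩
  refine ⟨WithTop V, inferInstance, completionE (monotoneClosure U), (↑),
    cwm_completionE (monotonic_monotoneClosure U) (noSinks_monotoneClosure hrank),
    (isMorphism_coe_completionE.comp (isMorphism_monotoneClosure U)).comp hEU, fun a => ?_⟩
  rw [vval_completionE_coe, vval_monotoneClosure hne hrank, hval]
end

section
/- Let L be a completely well-monotonic C-graph with min-predecessor maps ρ_c, let 𝒢 = (G, V_Eve, val) be a C-game with G = (V,E), let S = (H,F) be a strategy from a vertex v₀, and let ψ be a val-preserving morphism from S (viewed as a C-graph) to L. Define φ : V → L by φ(v) = inf { ψ(π) : π ∈ H and π ends in v }, where the empty path is deemed to end in v₀ (so φ(v) is the top element of L when no path of H ends in v). Then φ is a progress measure, and val_L(φ(v₀)) ≤ val(S). -/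
/-!
Common vocabulary: graphs as edge relations `E : V → C → V → Prop` (a `C`-graph
additionally has no sinks), infinite paths and their colorations, valuations,
values of vertices, morphisms, universality, monotonic graphs, games,
strategies, positional strategies and positionality, neutral colors.
-/

universe u v w

/-- The min-predecessor map `ρ_c` of a completely well-monotonic graph:
`ρ_c(l') = min { l | l →c l' }` (the infimum, which is attained by
well-foundedness and completeness). -/
noncomputable def minPred {C : Type} {L : Type v} [CompleteLinearOrder L]
    (M : L → C → L → Prop) (c : C) (l' : L) : L :=
  sInf {l | M l c l'}

open Classical in
/-- The update operator on maps `φ : V → L` associated to a game `(E, VEve)`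
and a completely well-monotonic graph `M`. -/
noncomputable def Upd {C : Type} {L : Type v} {V : Type w} [CompleteLinearOrder L]
    (M : L → C → L → Prop) (E : V → C → V → Prop) (VEve : Set V)
    (φ : V → L) (a : V) : L :=
  if a ∈ VEve then sInf {x | ∃ (c : C) (b : V), E a c b ∧ x = minPred M c (φ b)}
  else sSup {x | ∃ (c : C) (b : V), E a c b ∧ x = minPred M c (φ b)}

/-- A progress measure is a prefixpoint of the update operator. -/
def ProgressMeasure {C : Type} {L : Type v} {V : Type w} [CompleteLinearOrder L]
    (M : L → C → L → Prop) (E : V → C → V → Prop) (VEve : Set V)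
    (φ : V → L) : Prop :=
  ∀ a : V, Upd M E VEve φ a ≤ φ a
/-- A strategy `S = (H, F)` viewed as a `C`-graph over its set `H` of
histories. -/
def Strategy.rel {C : Type} {V : Type w} {E : V → C → V → Prop} {VEve : Set V}
    {v₀ : V} (S : Strategy E VEve v₀) :
    {π : List (C × V) // π ∈ S.H} → C → {π : List (C × V) // π ∈ S.H} → Prop :=
  fun p c q => S.F p.val c q.val

/-!
Every history `π` ending in `v` witnesses `φ v ≤ ψ π`. If `π →c π'` is an edge of the
strategy with `π'` ending in `v'`, then `ψ π →c ψ π'` in `L` and `φ v' ≤ ψ π'`, so by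
right composition `ψ π →c φ v'`, i.e. `ρ_c (φ v') ≤ ψ π`. At an Eve vertex the strategy
offers at least one such edge from every history, at an Adam vertex all of them; taking
the infimum over histories gives `Upd φ ≤ φ`. For the value, `φ v₀ ≤ ψ ε`, the value in
`L` is monotone by left composition, and `ψ` preserves values.
-/

theorem minPred_le_of_rel_of_le {C : Type} {L : Type*} [CompleteLinearOrder L]
    {M : L → C → L → Prop} (hright : RightComp M) {c : C} {l l₁ l₂ : L}
    (h : M l c l₁) (hle : l₂ ≤ l₁) : minPred M c l₂ ≤ l :=
  sInf_le (hright h hle)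

theorem InfPath.of_le {C : Type} {L : Type*} [LinearOrder L] {M : L → C → L → Prop}
    (hleft : LeftComp M) {a b : L} (hab : a ≤ b) {w : ℕ → C} (h : InfPath M a w) :
    InfPath M b w := by
  obtain ⟨ρ, rfl, hρ⟩ := h
  refine ⟨Function.update ρ 0 b, by simp, fun i => ?_⟩
  cases i with
  | zero => simpa using hleft hab (hρ 0)
  | succ n => simpa using hρ (n + 1)

theorem vval_mono {C X : Type} {L : Type*} [LinearOrder L] [CompleteLinearOrder X]
    (val : (ℕ → C) → X) {M : L → C → L → Prop} (hleft : LeftComp M) :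
    Monotone (vval val M) := fun _ _ hab =>
  sSup_le_sSup <| Set.image_mono fun _ hw => hw.of_le hleft hab

namespace Strategy

variable {C : Type} {V : Type*} {E : V → C → V → Prop} {VEve : Set V} {v₀ : V}
  (S : Strategy E VEve v₀)

theorem exists_edge_of_F {p π : List (C × V)} {c : C} (h : S.F p c π) :
    ∃ x, π = (c, x) :: p ∧ E (lastV v₀ p) c x := by
  obtain ⟨-, hπ, x, rfl⟩ := S.F_sub h
  exact ⟨x, rfl, (S.valid _ hπ).2⟩

theorem vval_rel_nil_le_value {X : Type} [CompleteLinearOrder X] (val : (ℕ → C) → X) :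
    vval val S.rel ⟨[], S.nil_mem⟩ ≤ S.value val :=
  sSup_le_sSup <| Set.image_mono fun _ ⟨ρ, hρ0, hρ⟩ =>
    ⟨fun i => (ρ i).val, congrArg Subtype.val hρ0, hρ⟩

end Strategy

section HistoryInf

variable {C : Type} {L : Type*} {V : Type*} [CompleteLinearOrder L] {M : L → C → L → Prop}
  {E : V → C → V → Prop} {VEve : Set V} {v₀ : V} {S : Strategy E VEve v₀}
  {ψ : {π : List (C × V) // π ∈ S.H} → L} {φ : V → L}

theorem apply_lastV_le (hφ : ∀ a, φ a = sInf (ψ '' {p | lastV v₀ p.val = a}))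
    (p : {π : List (C × V) // π ∈ S.H}) : φ (lastV v₀ p.val) ≤ ψ p := by
  rw [hφ]
  exact sInf_le ⟨p, rfl, rfl⟩

theorem minPred_le_of_F (hright : RightComp M) (hmor : IsMorphism S.rel M ψ)
    (hφ : ∀ a, φ a = sInf (ψ '' {p | lastV v₀ p.val = a}))
    {p π : List (C × V)} (hp : p ∈ S.H) (hπ : π ∈ S.H) {c : C} (hF : S.F p c π) :
    minPred M c (φ (lastV v₀ π)) ≤ ψ ⟨p, hp⟩ :=
  minPred_le_of_rel_of_le hright (hmor (show S.rel ⟨p, hp⟩ c ⟨π, hπ⟩ from hF))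
    (apply_lastV_le hφ ⟨π, hπ⟩)

theorem progressMeasure_of_isMorphism (hright : RightComp M) (hmor : IsMorphism S.rel M ψ)
    (hφ : ∀ a, φ a = sInf (ψ '' {p | lastV v₀ p.val = a})) :
    ProgressMeasure M E VEve φ := by
  intro a
  rw [Upd]
  split_ifs with ha
  · rw [hφ a]
    refine le_sInf ?_
    rintro _ ⟨⟨p, hp⟩, rfl, rfl⟩
    obtain ⟨c, π, hF⟩ := S.no_sink p hp
    have hπ := (S.F_sub hF).2.1
    obtain ⟨x, rfl, hE⟩ := S.exists_edge_of_F hF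
    exact le_trans (sInf_le ⟨c, x, hE, rfl⟩) (minPred_le_of_F hright hmor hφ hp hπ hF)
  · refine sSup_le ?_
    rintro _ ⟨c, b, hE, rfl⟩
    rw [hφ a]
    refine le_sInf ?_
    rintro _ ⟨⟨p, hp⟩, rfl, rfl⟩
    obtain ⟨hπ, hF⟩ := S.adam_closed p hp ha c b hE
    exact minPred_le_of_F hright hmor hφ hp hπ hF

theorem vval_le_value_of_valPreserving {X : Type} [CompleteLinearOrder X]
    {val : (ℕ → C) → X} (hleft : LeftComp M) (hψ : ValPreserving val S.rel M ψ)
    (hφ : ∀ a, φ a = sInf (ψ '' {p | lastV v₀ p.val = a})) :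
    vval val M (φ v₀) ≤ S.value val :=
  calc vval val M (φ v₀) ≤ vval val M (ψ ⟨[], S.nil_mem⟩) :=
        vval_mono val hleft (apply_lastV_le hφ ⟨[], S.nil_mem⟩)
    _ = vval val S.rel ⟨[], S.nil_mem⟩ := hψ.2 _
    _ ≤ S.value val := S.vval_rel_nil_le_value val

end HistoryInf

theorem stmt4_general {C X : Type} {L : Type v} {V : Type w} [CompleteLinearOrder X]
    [CompleteLinearOrder L] (val : (ℕ → C) → X)
    (M : L → C → L → Prop) (hmono : Monotonic M)
    (E : V → C → V → Prop) (VEve : Set V) (v₀ : V)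
    (S : Strategy E VEve v₀)
    (ψ : {π : List (C × V) // π ∈ S.H} → L)
    (hψ : ValPreserving val S.rel M ψ)
    (φ : V → L)
    (hφ : ∀ a : V, φ a = sInf (ψ '' {p | lastV v₀ p.val = a})) :
    ProgressMeasure M E VEve φ ∧ vval val M (φ v₀) ≤ S.value val :=
  ⟨progressMeasure_of_isMorphism hmono.2 hψ.1 hφ, vval_le_value_of_valPreserving hmono.1 hψ hφ⟩

/-- Lemma 4.2, from strategies to progress measures.
Given a strategy `S` from `v₀` and a `val`-preserving morphism `ψ` from `S`
to a completely well-monotonic graph `L`, the map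
`φ(v) = inf { ψ(π) | π ∈ H ends in v }` is a progress measure with
`val_L(φ(v₀)) ≤ val(S)`. -/
theorem stmt4 {C X : Type} {L : Type v} {V : Type w} [CompleteLinearOrder X]
    [CompleteLinearOrder L] (val : (ℕ → C) → X)
    (M : L → C → L → Prop) (hmono : Monotonic M) (hns : NoSinks M)
    (hwf : WellFounded ((· < ·) : L → L → Prop)) (hpred : CompletePreds M)
    (E : V → C → V → Prop) (hE : NoSinks E) (VEve : Set V) (v₀ : V)
    (S : Strategy E VEve v₀)
    (ψ : {π : List (C × V) // π ∈ S.H} → L)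
    (hψ : ValPreserving val S.rel M ψ)
    (φ : V → L)
    (hφ : ∀ a : V, φ a = sInf (ψ '' {p | lastV v₀ p.val = a})) :
    ProgressMeasure M E VEve φ ∧ vval val M (φ v₀) ≤ S.value val :=
  stmt4_general val M hmono E VEve v₀ S ψ hψ φ hφ
end

section
/- Let C = {safe, bad} and let Co-Büchi = { w ∈ C^ω : w contains only finitely many occurrences of bad }. For an ordinal α, let L_α be the C-graph with vertex set [0,α) (ordinals below α, with the ordinal order) and edges λ →bad λ' if and only if λ > λ', and λ →safe λ' if and only if λ ≥ λ'. Then L_α is well-monotonic, L_α satisfies Co-Büchi, and every C-graph with fewer than |α| vertices satisfying Co-Büchi admits a morphism into L_α. -/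
/-!
Common vocabulary: graphs as edge relations `E : V → C → V → Prop` (a `C`-graph
additionally has no sinks), infinite paths and their colorations, valuations,
values of vertices, morphisms, universality, monotonic graphs, games,
strategies, positional strategies and positionality, neutral colors.
-/

universe u v w

/-- The two colors for co-Büchi games. -/
inductive SC : Type
  | safe : SC
  | bad : SC

/-- The co-Büchi objective: finitely many occurrences of `bad`. -/
def CoBuchi : Set (ℕ → SC) := {w | {i : ℕ | w i = SC.bad}.Finite}

/-- The well-monotonic graph `L_α` over `[0, α)` for co-Büchi:
`λ →bad λ'` iff `λ > λ'`, and `λ →safe λ'` iff `λ ≥ λ'`. -/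
def cobuchiE (α : Ordinal.{0}) :
    ↥(Set.Iio α) → SC → ↥(Set.Iio α) → Prop :=
  fun l c l' =>
    match c with
    | SC.bad => l'.val < l.val
    | SC.safe => l'.val ≤ l.val


/-!
A path in `L_α` visits a non-increasing sequence of ordinals, which is eventually constant, and
bad edges strictly decrease; so only finitely many of them occur.

For universality, order the vertices of a co-Büchi graph by `v' ≺ v` when some path from `v`
ends with a bad edge into `v'`. An infinite `≺`-chain would glue into an infinite path with
infinitely many bad edges, so `≺` is well-founded, and its rank maps safe edges to `≥` and bad
edges to `>`. Ranks below `rank v` are all attained, so `(rank v).card ≤ #V < α.card`.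
-/

open Cardinal

section PathEndingWith

variable {C : Type} {V : Type*}

/-- `PathEndingWith E c n v v'`: a path of `n` edges from `v`, followed by a `c`-edge into `v'`. -/
def PathEndingWith (E : V → C → V → Prop) (c : C) : ℕ → V → V → Prop
  | 0, v, v' => E v c v'
  | n + 1, v, v' => ∃ c' x, E v c' x ∧ PathEndingWith E c n x v'

theorem exists_infPath_infinite_of_recurrent (E : V → C → V → Prop) (c : C) {S : Set V}
    (hS : ∀ v ∈ S, ∃ v' ∈ S, ∃ n, PathEndingWith E c n v v') {v : V} (hv : v ∈ S) :
    ∃ w, InfPath E v w ∧ {i | w i = c}.Infinite := by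
  -- A state is a vertex together with the number of edges left before the next `c`-edge into `S`.
  let State := {p : V × ℕ // ∃ v' ∈ S, PathEndingWith E c p.2 p.1 v'}
  have hstep : ∀ s : State, ∃ (c' : C) (s' : State),
      E s.1.1 c' s'.1.1 ∧ (s.1.2 = 0 ∧ c' = c ∨ s'.1.2 + 1 = s.1.2) := by
    rintro ⟨⟨u, _ | n⟩, v', hv', hp⟩
    · obtain ⟨v'', hv'', m, hm⟩ := hS v' hv'
      exact ⟨c, ⟨(v', m), v'', hv'', hm⟩, hp, Or.inl ⟨rfl, rfl⟩⟩
    · obtain ⟨c', x, hux, hx⟩ := hp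
      exact ⟨c', ⟨(x, n), v', hv', hx⟩, hux, Or.inr rfl⟩
  choose col next hnext using hstep
  obtain ⟨v', hv', n, hn⟩ := hS v hv
  let s : ℕ → State := fun i => next^[i] ⟨(v, n), v', hv', hn⟩
  have hs : ∀ i, s (i + 1) = next (s i) := fun i => Function.iterate_succ_apply' next i _
  have hcol : ∀ n t, (s t).1.2 = n → col (s (t + n)) = c := by
    intro n
    induction n with
    | zero =>
      intro t ht
      rcases (hnext (s t)).2 with ⟨-, h⟩ | h
      · exact h
      · omega
    | succ n ih =>
      intro t ht
      rcases (hnext (s t)).2 with ⟨h, -⟩ | h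
      · omega
      · rw [← hs, ht] at h
        simpa only [Nat.add_right_comm, Nat.add_assoc] using ih (t + 1) (by omega)
  refine ⟨fun i => col (s i), ⟨fun i => (s i).1.1, rfl, fun i => ?_⟩, ?_⟩
  · show E (s i).1.1 (col (s i)) (s (i + 1)).1.1
    rw [hs]
    exact (hnext (s i)).1
  · exact Set.infinite_of_forall_exists_gt fun t =>
      ⟨t + 1 + (s (t + 1)).1.2, hcol _ _ rfl, by omega⟩

theorem wellFounded_pathEndingWith (E : V → C → V → Prop) (c : C)
    (hfin : ∀ v w, InfPath E v w → {i | w i = c}.Finite) :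
    WellFounded fun v' v => ∃ n, PathEndingWith E c n v v' := by
  refine ⟨fun v => by_contra fun hv => ?_⟩
  obtain ⟨w, hw, hinf⟩ := exists_infPath_infinite_of_recurrent E c
    (S := {v | ¬Acc _ v}) (fun v hv => exists_not_acc_lt_of_not_acc hv) hv
  exact hinf (hfin v w hw)

end PathEndingWith

theorem IsWellFounded.rank_le_rank_of_forall_rel {α : Type*} {r : α → α → Prop}
    [IsWellFounded α r] {a b : α} (h : ∀ c, r c a → r c b) : rank r a ≤ rank r b := by
  rw [rank_eq r a]
  exact Ordinal.iSup_le fun c => Order.succ_le_of_lt (rank_lt_of_rel (h c.1 c.2))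

theorem IsWellFounded.card_rank_le {α : Type u} (r : α → α → Prop) [IsWellFounded α r]
    (a : α) :
    (rank r a).card ≤ #α := by
  have hIio : #(Set.Iio (rank r a)) ≤ #(Set.range (rank r)) :=
    mk_le_mk_of_subset fun o ho => mem_range_rank_of_le (le_of_lt ho)
  rw [mk_Iio_ordinal] at hIio
  have hrange : lift.{u} #(Set.range (rank r)) ≤ lift.{u + 1} #α := mk_range_le_lift
  rw [lift_id'.{u, u + 1}] at hrange
  exact lift_le.1 (hIio.trans hrange)

theorem cobuchiE_monotonic (α : Ordinal.{0}) : Monotonic (cobuchiE α) := by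
  constructor
  · intro a b c d hba h
    cases c with
    | safe => exact le_trans h hba
    | bad => exact lt_of_lt_of_le h hba
  · intro a c b d h hdb
    cases c with
    | safe => exact le_trans hdb h
    | bad => exact lt_of_le_of_lt hdb h

theorem sat_cobuchiE (α : Ordinal.{0}) (l : Set.Iio α) : Sat CoBuchi (cobuchiE α) l := by
  rintro w ⟨ρ, -, hρ⟩
  have hle : ∀ i, ρ (i + 1) ≤ ρ i := fun i =>
    match w i, hρ i with
    | .safe, h => h
    | .bad, h => le_of_lt h
  obtain ⟨N, hN⟩ := WellFoundedLT.antitone_chain_condition (antitone_nat_of_succ_le hle)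
  refine (Set.finite_Iio N).subset fun i (hi : w i = SC.bad) =>
    show i < N from lt_of_not_ge fun hNi => ?_
  have hbad : ρ (i + 1) < ρ i := by
    have := hρ i
    rwa [hi] at this
  rw [← hN i hNi, ← hN (i + 1) (by omega)] at hbad
  exact lt_irrefl _ hbad

theorem exists_isMorphism_cobuchiE (α : Ordinal.{0}) {V : Type} (E : V → SC → V → Prop)
    (hcard : #V < α.card) (hsat : ∀ v, Sat CoBuchi E v) :
    ∃ φ : V → Set.Iio α, IsMorphism E (cobuchiE α) φ := by
  let r : V → V → Prop := fun v' v => ∃ n, PathEndingWith E SC.bad n v v'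
  have : IsWellFounded V r := ⟨wellFounded_pathEndingWith E SC.bad hsat⟩
  have hlt : ∀ v, IsWellFounded.rank r v < α := fun v => by
    by_contra! h
    exact (Ordinal.card_le_card h |>.trans (IsWellFounded.card_rank_le r v)).not_gt hcard
  refine ⟨fun v => ⟨IsWellFounded.rank r v, hlt v⟩, fun a c b hab => ?_⟩
  cases c with
  | safe =>
    exact IsWellFounded.rank_le_rank_of_forall_rel fun _ ⟨n, hn⟩ =>
      ⟨n + 1, SC.safe, b, hab, hn⟩
  | bad => exact IsWellFounded.rank_lt_of_rel ⟨0, hab⟩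

/-- Lemma 6.7.  `L_α` is well-monotonic, satisfies
co-Büchi, and embeds every graph with fewer than `|α|` vertices satisfying
co-Büchi. -/
theorem stmt13 (α : Ordinal.{0}) :
    Monotonic (cobuchiE α) ∧ NoSinks (cobuchiE α) ∧
    WellFounded ((· < ·) : ↥(Set.Iio α) → ↥(Set.Iio α) → Prop) ∧
    (∀ l : ↥(Set.Iio α), Sat CoBuchi (cobuchiE α) l) ∧
    (∀ (V : Type) (E : V → SC → V → Prop), NoSinks E →
      Cardinal.mk V < α.card → (∀ v : V, Sat CoBuchi E v) →
      ∃ φ : V → ↥(Set.Iio α), IsMorphism E (cobuchiE α) φ) :=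
  ⟨cobuchiE_monotonic α, fun l => ⟨SC.safe, l, le_refl _⟩, wellFounded_lt, sat_cobuchiE α,
    fun _ E _ hcard hsat => exists_isMorphism_cobuchiE α E hcard hsat⟩
end
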